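/- arXiv:0711.3632 — 2 statements merged into one kernel-verified Lean document; each statement's English description precedes it below -/
import Mathlib

section
/- Let V_p : ℝⁿ → [0,∞), p ∈ 𝒫, be continuously differentiable functions, λ₀ > 0, μ > 1, satisfying ⟨∇V_p(x), f_p(x)⟩ ≤ −λ₀ V_p(x) for all x and p, and V_{p₁}(x) ≤ μ V_{p₂}(x) for all x, p₁, p₂. Let x(·) solve the switched system ẋ = f_{σ(t)}(x) with switching instants 0 = τ₀ < τ₁ < τ₂ < ⋯ and N(t) switches on (0, t]. Then for every t ≥ 0: V_{σ(t)}(x(t)) ≤ μ^{N(t)} e^{−λ₀ t} V_{σ(0)}(x₀). -/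
open Real Set Filter

/-!
On each switching interval `[τ i, τ (i+1)]` the mode `p = σ (τ i)` is frozen, and the decay
condition makes `s ↦ V_p (x s) e^{λ₀ s}` nonincreasing. At a switching instant the active
Lyapunov function changes by a factor at most `μ`, so the values
`V_{σ(τ i)} (x (τ i)) e^{λ₀ τ i}` grow at most geometrically with ratio `μ`; combining both
bounds at `τ (N t) ≤ t` gives the estimate.
-/

lemma antitoneOn_mul_exp_of_hasDerivAt_le_neg_mul {g g' : ℝ → ℝ} {a b lam : ℝ}
    (hg : ContinuousOn g (Icc a b)) (hderiv : ∀ s ∈ Ioo a b, HasDerivAt g (g' s) s)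
    (hdecay : ∀ s ∈ Ioo a b, g' s ≤ -lam * g s) :
    AntitoneOn (fun s => g s * exp (lam * s)) (Icc a b) := by
  have hexp : ∀ s, HasDerivAt (fun s => exp (lam * s)) (exp (lam * s) * lam) s := fun s => by
    simpa using ((hasDerivAt_id s).const_mul lam).exp
  refine antitoneOn_of_hasDerivWithinAt_nonpos (convex_Icc a b)
    (hg.mul (continuous_exp.comp (continuous_const.mul continuous_id)).continuousOn)
    (f' := fun s => g' s * exp (lam * s) + g s * (exp (lam * s) * lam)) (fun s hs => ?_)
    (fun s hs => ?_)
  · rw [interior_Icc] at hs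
    exact ((hderiv s hs).mul (hexp s)).hasDerivWithinAt
  · rw [interior_Icc] at hs
    calc g' s * exp (lam * s) + g s * (exp (lam * s) * lam)
        ≤ -lam * g s * exp (lam * s) + g s * (exp (lam * s) * lam) := by
          gcongr
          exact hdecay s hs
      _ = 0 := by ring

lemma antitoneOn_comp_mul_exp_of_fderiv_le_neg_mul {E : Type*} [NormedAddCommGroup E]
    [NormedSpace ℝ E] {W : E → ℝ} {F : E → E} {y : ℝ → E} {a b lam : ℝ}
    (hW : Differentiable ℝ W) (hdecay : ∀ z, fderiv ℝ W z (F z) ≤ -lam * W z)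
    (hy : ContinuousOn y (Icc a b)) (hsol : ∀ s ∈ Ioo a b, HasDerivAt y (F (y s)) s) :
    AntitoneOn (fun s => W (y s) * exp (lam * s)) (Icc a b) :=
  antitoneOn_mul_exp_of_hasDerivAt_le_neg_mul (hW.continuous.comp_continuousOn hy)
    (fun s hs => (hW (y s)).hasFDerivAt.comp_hasDerivAt s (hsol s hs))
    (fun s _ => hdecay (y s))

lemma StrictMono.notMem_range_of_mem_Ioo {α : Type*} [Preorder α] {τ : ℕ → α}
    (hτ : StrictMono τ) {i : ℕ} {s : α} (hs : s ∈ Ioo (τ i) (τ (i + 1))) : s ∉ range τ := by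
  rintro ⟨j, rfl⟩
  have := hτ.lt_iff_lt.mp hs.1
  have := hτ.lt_iff_lt.mp hs.2
  omega

theorem pathwise_lyapunov_iteration_general
    {n : ℕ} {P : Type*}
    (f : P → EuclideanSpace ℝ (Fin n) → EuclideanSpace ℝ (Fin n))
    (V : P → EuclideanSpace ℝ (Fin n) → ℝ)
    (hVC1 : ∀ p, ContDiff ℝ 1 (V p))
    (lam₀ μ : ℝ) (hμ : 1 < μ)
    (hdecay : ∀ p y, fderiv ℝ (V p) y (f p y) ≤ -lam₀ * V p y)
    (hratio : ∀ p₁ p₂ y, V p₁ y ≤ μ * V p₂ y)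
    (τ : ℕ → ℝ) (hτ0 : τ 0 = 0) (hτmono : StrictMono τ)
    (σ : ℝ → P) (hσ : ∀ i : ℕ, ∀ t ∈ Set.Ico (τ i) (τ (i + 1)), σ t = σ (τ i))
    (N : ℝ → ℕ) (hN : ∀ t : ℝ, 0 ≤ t → τ (N t) ≤ t ∧ t < τ (N t + 1))
    (x : ℝ → EuclideanSpace ℝ (Fin n)) (x₀ : EuclideanSpace ℝ (Fin n))
    (hx0 : x 0 = x₀) (hxcont : Continuous x)
    (hsol : ∀ t : ℝ, 0 ≤ t → t ∉ Set.range τ → HasDerivAt x (f (σ t) (x t)) t) :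
    ∀ t : ℝ, 0 ≤ t →
      V (σ t) (x t) ≤ μ ^ (N t) * Real.exp (-lam₀ * t) * V (σ 0) x₀ := by
  have hτ_nonneg : ∀ i, 0 ≤ τ i := fun i => hτ0 ▸ hτmono.monotone i.zero_le
  have hinterval : ∀ i, AntitoneOn (fun s => V (σ (τ i)) (x s) * exp (lam₀ * s))
      (Icc (τ i) (τ (i + 1))) := fun i =>
    antitoneOn_comp_mul_exp_of_fderiv_le_neg_mul ((hVC1 _).differentiable one_ne_zero)
      (hdecay _) hxcont.continuousOn fun s hs => by
        rw [← hσ i s (Ioo_subset_Ico_self hs)]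
        exact hsol s ((hτ_nonneg i).trans hs.1.le) (hτmono.notMem_range_of_mem_Ioo hs)
  have hleft : ∀ i, τ i ∈ Icc (τ i) (τ (i + 1)) := fun i =>
    left_mem_Icc.2 (hτmono i.lt_succ_self).le
  set a : ℕ → ℝ := fun i => V (σ (τ i)) (x (τ i)) * exp (lam₀ * τ i) with ha
  have hjump : ∀ i, a (i + 1) ≤ μ * a i := fun i => calc
    a (i + 1) ≤ μ * V (σ (τ i)) (x (τ (i + 1))) * exp (lam₀ * τ (i + 1)) :=
      mul_le_mul_of_nonneg_right (hratio _ _ _) (exp_pos _).le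
    _ ≤ μ * a i := by
      rw [mul_assoc]
      exact mul_le_mul_of_nonneg_left (hinterval i (hleft i)
        (right_mem_Icc.2 (hτmono i.lt_succ_self).le) (hτmono i.lt_succ_self).le) (by linarith)
  intro t ht
  obtain ⟨hNt, htN⟩ := hN t ht
  rw [hσ _ t ⟨hNt, htN⟩, neg_mul, exp_neg, mul_right_comm, ← div_eq_mul_inv,
    le_div_iff₀ (exp_pos _)]
  calc V (σ (τ (N t))) (x t) * exp (lam₀ * t)
      ≤ a (N t) := hinterval _ (hleft _) ⟨hNt, htN.le⟩ hNt
    _ ≤ μ ^ N t * a 0 := le_geom (by linarith) (N t) fun k _ => hjump k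
    _ = μ ^ N t * V (σ 0) x₀ := by simp [ha, hτ0, hx0]

/-- Pathwise multiple-Lyapunov-function estimate: along a solution of the switched
system with switching instants `τ i` and switch count `N t`, one has
`V_{σ(t)}(x(t)) ≤ μ^{N(t)} e^{-λ₀ t} V_{σ(0)}(x₀)`. -/
theorem pathwise_lyapunov_iteration
    {n : ℕ} {P : Type*} [Finite P]
    (f : P → EuclideanSpace ℝ (Fin n) → EuclideanSpace ℝ (Fin n))
    (hf : ∀ p, LocallyLipschitz (f p))
    (V : P → EuclideanSpace ℝ (Fin n) → ℝ)
    (hVC1 : ∀ p, ContDiff ℝ 1 (V p)) (hVnonneg : ∀ p y, 0 ≤ V p y)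
    (lam₀ μ : ℝ) (hlam : 0 < lam₀) (hμ : 1 < μ)
    (hdecay : ∀ p y, fderiv ℝ (V p) y (f p y) ≤ -lam₀ * V p y)
    (hratio : ∀ p₁ p₂ y, V p₁ y ≤ μ * V p₂ y)
    (τ : ℕ → ℝ) (hτ0 : τ 0 = 0) (hτmono : StrictMono τ)
    (hτdiv : Filter.Tendsto τ Filter.atTop Filter.atTop)
    (σ : ℝ → P) (hσ : ∀ i : ℕ, ∀ t ∈ Set.Ico (τ i) (τ (i + 1)), σ t = σ (τ i))
    (N : ℝ → ℕ) (hN : ∀ t : ℝ, 0 ≤ t → τ (N t) ≤ t ∧ t < τ (N t + 1))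
    (x : ℝ → EuclideanSpace ℝ (Fin n)) (x₀ : EuclideanSpace ℝ (Fin n))
    (hx0 : x 0 = x₀) (hxcont : Continuous x)
    (hsol : ∀ t : ℝ, 0 ≤ t → t ∉ Set.range τ → HasDerivAt x (f (σ t) (x t)) t) :
    ∀ t : ℝ, 0 ≤ t →
      V (σ t) (x t) ≤ μ ^ (N t) * Real.exp (-lam₀ * t) * V (σ 0) x₀ :=
  pathwise_lyapunov_iteration_general f V hVC1 lam₀ μ hμ hdecay hratio τ hτ0 hτmono σ hσ N hN x x₀
    hx0 hxcont hsol
end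

section
/- Under the hypotheses: (i) ⟨∇V_p, f_p⟩ ≤ −λ₀ V_p for all p; (ii) V_{p₁} ≤ μ V_{p₂} pointwise for all p₁, p₂; (iii) E[μ^{N(t)}] ≤ S + e^{(μ λ̄ − λ̃)t} where S ≥ 0; and (iv) μ λ̄ − λ̃ < λ₀, we have E[V_{σ(t)}(x(t))] ≤ (S + e^{(μλ̄ − λ̃)t}) e^{−λ₀ t} V_{σ(0)}(x₀), and consequently lim_{t→∞} E[V_{σ(t)}(x(t))] = 0 and ∫_0^∞ E[V_{σ(t)}(x(t))] dt < ∞. -/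
open Real Set Filter MeasureTheory Topology

/-!
Between two switches the active Lyapunov function decays like `e^{-λ₀ t}` along the solution,
and at a switch it is multiplied by at most `μ`; hence pathwise
`V_{σ(t)}(x(t)) ≤ μ^{N(t)} e^{-λ₀ t} V_{σ(0)}(x₀)`, and taking expectations together with the
bound on `E[μ^{N(t)}]` gives the estimate. Slow switching makes the bound an integrable function
tending to `0`. For integrability of the expectation one also needs its measurability in `t`:
it is right-continuous by dominated convergence, because every path is.
-/

section Exponential

theorem add_exp_mul_exp_neg_eq (S a b t : ℝ) :
    (S + exp (a * t)) * exp (-b * t) = S * exp (-b * t) + exp (-(b - a) * t) := by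
  rw [add_mul, ← exp_add]
  ring_nf

variable (S : ℝ) {a b : ℝ}

theorem tendsto_add_exp_mul_exp_neg (hb : 0 < b) (hab : a < b) :
    Tendsto (fun t => (S + exp (a * t)) * exp (-b * t)) atTop (𝓝 0) := by
  have hdecay {c : ℝ} (hc : 0 < c) : Tendsto (fun t => exp (-c * t)) atTop (𝓝 0) :=
    tendsto_exp_atBot.comp (tendsto_id.const_mul_atTop_of_neg (neg_lt_zero.2 hc))
  simp_rw [add_exp_mul_exp_neg_eq]
  simpa using ((hdecay hb).const_mul S).add (hdecay (sub_pos.2 hab))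

theorem integrableOn_add_exp_mul_exp_neg (hb : 0 < b) (hab : a < b) :
    IntegrableOn (fun t => (S + exp (a * t)) * exp (-b * t)) (Ici 0) := by
  have hdecay {c : ℝ} (hc : 0 < c) : IntegrableOn (fun t => exp (-c * t)) (Ici 0) :=
    (integrableOn_Ici_iff_integrableOn_Ioi).2 (exp_neg_integrableOn_Ioi 0 hc)
  simp_rw [add_exp_mul_exp_neg_eq]
  exact ((hdecay hb).const_mul S).add (hdecay (sub_pos.2 hab))

end Exponential

theorem tendsto_ceil_mul_div_nhdsGE (t : ℝ) :
    Tendsto (fun m : ℕ => (⌈t * (m + 1)⌉ : ℝ) / (m + 1)) atTop (𝓝[≥] t) := by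
  have hm (m : ℕ) : (0 : ℝ) < m + 1 := by positivity
  have hlow (m : ℕ) : t ≤ (⌈t * (m + 1)⌉ : ℝ) / (m + 1) := by
    rw [le_div_iff₀ (hm m)]
    exact Int.le_ceil _
  have hup (m : ℕ) : (⌈t * (m + 1)⌉ : ℝ) / (m + 1) ≤ t + 1 / (m + 1) := by
    rw [div_le_iff₀ (hm m), add_mul, one_div_mul_cancel (hm m).ne']
    exact (Int.ceil_lt_add_one _).le
  refine tendsto_nhdsWithin_of_tendsto_nhds_of_eventually_within _ ?_ (.of_forall hlow)
  refine tendsto_of_tendsto_of_tendsto_of_le_of_le tendsto_const_nhds ?_ hlow hup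
  simpa using tendsto_const_nhds.add (tendsto_one_div_add_atTop_nhds_zero_nat (𝕜 := ℝ))

/-- Right-continuous functions are approximated by the step functions `t ↦ g (⌈t m⌉ / m)`. -/
theorem aemeasurable_of_ae_continuousWithinAt_Ici {β : Type*} [TopologicalSpace β]
    [TopologicalSpace.PseudoMetrizableSpace β] [MeasurableSpace β] [BorelSpace β]
    {μ : Measure ℝ} {g : ℝ → β}
    (hg : ∀ᵐ t ∂μ, ContinuousWithinAt g (Ici t) t) : AEMeasurable g μ := by
  refine aemeasurable_of_tendsto_metrizable_ae'
    (f := fun (m : ℕ) (t : ℝ) => g (⌈t * (m + 1)⌉ / (m + 1))) (fun m => ?_) ?_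
  · exact ((Measurable.of_discrete (f := fun k : ℤ => g (k / ((m : ℝ) + 1)))).comp
      (Int.measurable_ceil.comp (measurable_id.mul_const _))).aemeasurable
  · filter_upwards [hg] with t ht
    exact ht.tendsto.comp (tendsto_ceil_mul_div_nhdsGE t)

theorem StrictMono.monotoneOn_of_mem_Ico {τ : ℕ → ℝ} (hτ : StrictMono τ) {N : ℝ → ℕ}
    {s : Set ℝ} (hN : ∀ t ∈ s, t ∈ Ico (τ (N t)) (τ (N t + 1))) : MonotoneOn N s := by
  intro a ha b hb hab
  by_contra! hlt
  linarith [(hN a ha).1, (hN b hb).2, hτ.monotone (Nat.succ_le_of_lt hlt)]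

section Lyapunov

variable {E : Type*} [NormedAddCommGroup E] [NormedSpace ℝ E]

theorem antitoneOn_mul_exp_of_fderiv_le {W : E → ℝ} {F : E → E} {x : ℝ → E} {lam s t : ℝ}
    (hW : Differentiable ℝ W) (hdecay : ∀ y, fderiv ℝ W y (F y) ≤ -lam * W y)
    (hx : ContinuousOn x (Icc s t)) (hsol : ∀ u ∈ Ioo s t, HasDerivAt x (F (x u)) u) :
    AntitoneOn (fun u => W (x u) * exp (lam * u)) (Icc s t) := by
  have hderiv (u : ℝ) (hu : u ∈ Ioo s t) : HasDerivAt (fun u => W (x u) * exp (lam * u))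
      (fderiv ℝ W (x u) (F (x u)) * exp (lam * u) + W (x u) * (exp (lam * u) * (lam * 1))) u :=
    ((hW (x u)).hasFDerivAt.comp_hasDerivAt u (hsol u hu)).mul ((hasDerivAt_id u).const_mul lam).exp
  refine antitoneOn_of_deriv_nonpos (convex_Icc s t)
    ((hW.continuous.comp_continuousOn hx).mul (by fun_prop)) ?_ ?_ <;> rw [interior_Icc]
  · exact fun u hu => (hderiv u hu).differentiableAt.differentiableWithinAt
  · intro u hu
    rw [(hderiv u hu).deriv]
    nlinarith [mul_le_mul_of_nonneg_right (hdecay (x u)) (exp_pos (lam * u)).le]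

structure IsSwitchedSolution {P : Type*} (f : P → E → E) (τ : ℕ → ℝ) (σ : ℝ → P) (x : ℝ → E) :
    Prop where
  switchTime_zero : τ 0 = 0
  strictMono_switchTime : StrictMono τ
  eq_of_mem_Ico : ∀ i, ∀ t ∈ Ico (τ i) (τ (i + 1)), σ t = σ (τ i)
  continuous : Continuous x
  hasDerivAt : ∀ t, 0 ≤ t → t ∉ range τ → HasDerivAt x (f (σ t) (x t)) t

namespace IsSwitchedSolution

variable {P : Type*} {f : P → E → E} {τ : ℕ → ℝ} {σ : ℝ → P} {x : ℝ → E}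

theorem switchTime_nonneg (h : IsSwitchedSolution f τ σ x) (i : ℕ) : 0 ≤ τ i :=
  h.switchTime_zero ▸ h.strictMono_switchTime.monotone i.zero_le

theorem hasDerivAt_of_mem_Ioo (h : IsSwitchedSolution f τ σ x) {i : ℕ} {u : ℝ}
    (hu : u ∈ Ioo (τ i) (τ (i + 1))) : HasDerivAt x (f (σ (τ i)) (x u)) u := by
  have hswitch : u ∉ range τ := by
    rintro ⟨j, rfl⟩
    have := h.strictMono_switchTime.lt_iff_lt.1 hu.1
    have := h.strictMono_switchTime.lt_iff_lt.1 hu.2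
    omega
  simpa only [h.eq_of_mem_Ico i u (Ioo_subset_Ico_self hu)] using
    h.hasDerivAt u ((h.switchTime_nonneg i).trans hu.1.le) hswitch

theorem continuousWithinAt_Ici {V : P → E → ℝ} (h : IsSwitchedSolution f τ σ x)
    (hV : ∀ p, Continuous (V p)) {i : ℕ} {t : ℝ} (ht : t ∈ Ico (τ i) (τ (i + 1))) :
    ContinuousWithinAt (fun s => V (σ s) (x s)) (Ici t) t := by
  refine ((hV _).comp h.continuous).continuousAt.continuousWithinAt.congr_of_eventuallyEq
    (f := fun s => V (σ (τ i)) (x s)) ?_ (by simp only [h.eq_of_mem_Ico i t ht])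
  filter_upwards [Ico_mem_nhdsGE ht.2] with s hs
  simp only [h.eq_of_mem_Ico i s ⟨ht.1.trans hs.1, hs.2⟩]

variable {V : P → E → ℝ} {lam μ : ℝ}
  (hV : ∀ p, Differentiable ℝ (V p)) (hdecay : ∀ p y, fderiv ℝ (V p) y (f p y) ≤ -lam * V p y)
include hV hdecay

theorem antitoneOn_mul_exp (h : IsSwitchedSolution f τ σ x) (i : ℕ) :
    AntitoneOn (fun u => V (σ (τ i)) (x u) * exp (lam * u)) (Icc (τ i) (τ (i + 1))) :=
  antitoneOn_mul_exp_of_fderiv_le (hV _) (hdecay _) h.continuous.continuousOn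
    fun _ hu => h.hasDerivAt_of_mem_Ioo hu

variable (hratio : ∀ p₁ p₂ y, V p₁ y ≤ μ * V p₂ y) (hμ : 0 ≤ μ)
include hratio hμ

theorem mul_exp_switchTime_le (h : IsSwitchedSolution f τ σ x) (i : ℕ) :
    V (σ (τ i)) (x (τ i)) * exp (lam * τ i) ≤ μ ^ i * V (σ 0) (x 0) := by
  induction i with
  | zero => simp [h.switchTime_zero]
  | succ i ih =>
    have hle : τ i ≤ τ (i + 1) := h.strictMono_switchTime.monotone i.le_succ
    calc V (σ (τ (i + 1))) (x (τ (i + 1))) * exp (lam * τ (i + 1))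
        ≤ μ * (V (σ (τ i)) (x (τ (i + 1))) * exp (lam * τ (i + 1))) := by
          rw [← mul_assoc]
          exact mul_le_mul_of_nonneg_right (hratio _ _ _) (exp_pos _).le
      _ ≤ μ * (V (σ (τ i)) (x (τ i)) * exp (lam * τ i)) :=
          mul_le_mul_of_nonneg_left (h.antitoneOn_mul_exp hV hdecay i
            (left_mem_Icc.2 hle) (right_mem_Icc.2 hle) hle) hμ
      _ ≤ μ * (μ ^ i * V (σ 0) (x 0)) := mul_le_mul_of_nonneg_left ih hμ
      _ = μ ^ (i + 1) * V (σ 0) (x 0) := by ring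

theorem le_pow_mul_exp_of_mem_Ico (h : IsSwitchedSolution f τ σ x) {i : ℕ} {t : ℝ}
    (ht : t ∈ Ico (τ i) (τ (i + 1))) :
    V (σ t) (x t) ≤ μ ^ i * exp (-lam * t) * V (σ 0) (x 0) := by
  have hdecay_to_t : V (σ (τ i)) (x t) * exp (lam * t) ≤ μ ^ i * V (σ 0) (x 0) :=
    (h.antitoneOn_mul_exp hV hdecay i (left_mem_Icc.2 (ht.1.trans ht.2.le)) ⟨ht.1, ht.2.le⟩
      ht.1).trans (h.mul_exp_switchTime_le hV hdecay hratio hμ i)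
  rw [h.eq_of_mem_Ico i t ht]
  calc V (σ (τ i)) (x t) = V (σ (τ i)) (x t) * exp (lam * t) * exp (-lam * t) := by
        rw [mul_assoc, ← exp_add, neg_mul, add_neg_cancel, exp_zero, mul_one]
    _ ≤ μ ^ i * V (σ 0) (x 0) * exp (-lam * t) :=
        mul_le_mul_of_nonneg_right hdecay_to_t (exp_pos _).le
    _ = μ ^ i * exp (-lam * t) * V (σ 0) (x 0) := by ring

end IsSwitchedSolution

end Lyapunov

theorem continuousWithinAt_integral_Ici {Ω : Type*} [MeasurableSpace Ω] {ℙ : Measure Ω}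
    {W : Ω → ℝ → ℝ} {N : Ω → ℝ → ℕ} {μ C t : ℝ} (hμ : 1 ≤ μ) (hC : 0 ≤ C) (ht : 0 ≤ t)
    (hmeas : ∀ s, AEStronglyMeasurable (fun ω => W ω s) ℙ)
    (hbound : ∀ ω s, 0 ≤ s → ‖W ω s‖ ≤ μ ^ N ω s * C) (hN : ∀ ω, MonotoneOn (N ω) (Ici 0))
    (hint : Integrable (fun ω => μ ^ N ω (t + 1)) ℙ)
    (hcont : ∀ ω, ContinuousWithinAt (W ω) (Ici t) t) :
    ContinuousWithinAt (fun s => ∫ ω, W ω s ∂ℙ) (Ici t) t := by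
  refine continuousWithinAt_of_dominated (bound := fun ω => μ ^ N ω (t + 1) * C)
    (.of_forall hmeas) ?_ (hint.mul_const C) (ae_of_all _ hcont)
  filter_upwards [Icc_mem_nhdsGE (lt_add_one t)] with s hs
  refine ae_of_all _ fun ω => (hbound ω s (ht.trans hs.1)).trans ?_
  gcongr
  exact hN ω (ht.trans hs.1) (by simp only [mem_Ici]; linarith) hs.2

theorem expected_lyapunov_decay_general
    {n : ℕ} {P : Type*}
    {Ω : Type*} [MeasurableSpace Ω] (ℙ : Measure Ω)
    (f : P → EuclideanSpace ℝ (Fin n) → EuclideanSpace ℝ (Fin n))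
    (V : P → EuclideanSpace ℝ (Fin n) → ℝ)
    (hVC1 : ∀ p, ContDiff ℝ 1 (V p)) (hVnonneg : ∀ p y, 0 ≤ V p y)
    (lam₀ lamTilde lamBar μ S : ℝ)
    (hlam : 0 < lam₀) (hμ : 1 < μ)
    (hdecay : ∀ p y, fderiv ℝ (V p) y (f p y) ≤ -lam₀ * V p y)
    (hratio : ∀ p₁ p₂ y, V p₁ y ≤ μ * V p₂ y)
    (σ : Ω → ℝ → P) (X : Ω → ℝ → EuclideanSpace ℝ (Fin n)) (N : Ω → ℝ → ℕ)
    (τ : Ω → ℕ → ℝ) (x₀ : EuclideanSpace ℝ (Fin n)) (p₀ : P)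
    -- pathwise structure of the randomly switched system
    (hτ0 : ∀ ω, τ ω 0 = 0) (hτmono : ∀ ω, StrictMono (τ ω))
    (hσ : ∀ ω, ∀ i : ℕ, ∀ t ∈ Set.Ico (τ ω i) (τ ω (i + 1)), σ ω t = σ ω (τ ω i))
    (hσ0 : ∀ ω, σ ω 0 = p₀)
    (hN : ∀ ω, ∀ t : ℝ, 0 ≤ t → τ ω (N ω t) ≤ t ∧ t < τ ω (N ω t + 1))
    (hx0 : ∀ ω, X ω 0 = x₀) (hxcont : ∀ ω, Continuous (X ω))
    (hsol : ∀ ω, ∀ t : ℝ, 0 ≤ t → t ∉ Set.range (τ ω) →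
      HasDerivAt (X ω) (f (σ ω t) (X ω t)) t)
    -- measurability and integrability
    (hVmeas : ∀ t : ℝ, Measurable (fun ω => V (σ ω t) (X ω t)))
    (hNint : ∀ t : ℝ, 0 ≤ t → Integrable (fun ω => μ ^ (N ω t)) ℙ)
    -- (iii): moment generating function bound
    (hmgf : ∀ t : ℝ, 0 ≤ t →
      ∫ ω, (μ : ℝ) ^ (N ω t) ∂ℙ ≤ S + Real.exp ((μ * lamBar - lamTilde) * t))
    -- (iv): slow switching
    (hslow : μ * lamBar - lamTilde < lam₀) :
    (∀ t : ℝ, 0 ≤ t →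
        ∫ ω, V (σ ω t) (X ω t) ∂ℙ ≤
          (S + Real.exp ((μ * lamBar - lamTilde) * t)) * Real.exp (-lam₀ * t) * V p₀ x₀) ∧
      Filter.Tendsto (fun t => ∫ ω, V (σ ω t) (X ω t) ∂ℙ) Filter.atTop (nhds 0) ∧
      IntegrableOn (fun t => ∫ ω, V (σ ω t) (X ω t) ∂ℙ) (Set.Ici (0:ℝ)) := by
  have hsw (ω : Ω) : IsSwitchedSolution f (τ ω) (σ ω) (X ω) :=
    ⟨hτ0 ω, hτmono ω, hσ ω, hxcont ω, hsol ω⟩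
  have hpath (ω : Ω) (t : ℝ) (ht : 0 ≤ t) :
      V (σ ω t) (X ω t) ≤ μ ^ N ω t * exp (-lam₀ * t) * V p₀ x₀ := by
    simpa only [hσ0, hx0] using (hsw ω).le_pow_mul_exp_of_mem_Ico
      (fun p => (hVC1 p).differentiable one_ne_zero) hdecay hratio (by linarith) (hN ω t ht)
  have hbound (t : ℝ) (ht : 0 ≤ t) : ∫ ω, V (σ ω t) (X ω t) ∂ℙ ≤
      (S + exp ((μ * lamBar - lamTilde) * t)) * exp (-lam₀ * t) * V p₀ x₀ := calc
    _ ≤ ∫ ω, μ ^ N ω t * exp (-lam₀ * t) * V p₀ x₀ ∂ℙ :=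
        integral_mono_of_nonneg (ae_of_all _ fun _ => hVnonneg _ _)
          (((hNint t ht).mul_const _).mul_const _) (ae_of_all _ fun ω => hpath ω t ht)
    _ = (∫ ω, μ ^ N ω t ∂ℙ) * exp (-lam₀ * t) * V p₀ x₀ := by
        rw [integral_mul_const, integral_mul_const]
    _ ≤ _ := by gcongr; exacts [hVnonneg _ _, hmgf t ht]
  have hmeas : AEStronglyMeasurable (fun t => ∫ ω, V (σ ω t) (X ω t) ∂ℙ)
      (volume.restrict (Ici 0)) := by
    refine (aemeasurable_of_ae_continuousWithinAt_Ici ?_).aestronglyMeasurable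
    filter_upwards [ae_restrict_mem measurableSet_Ici] with t (ht : 0 ≤ t)
    refine continuousWithinAt_integral_Ici hμ.le (hVnonneg p₀ x₀) ht
      (fun s => (hVmeas s).aestronglyMeasurable) (fun ω s hs => ?_)
      (fun ω => (hτmono ω).monotoneOn_of_mem_Ico (hN ω)) (hNint (t + 1) (by linarith))
      (fun ω => (hsw ω).continuousWithinAt_Ici (fun p => (hVC1 p).continuous) (hN ω t ht))
    rw [norm_of_nonneg (hVnonneg _ _)]
    have hexp : exp (-lam₀ * s) ≤ 1 := exp_le_one_iff.2 (by nlinarith)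
    exact (hpath ω s hs).trans (mul_le_mul_of_nonneg_right
      (mul_le_of_le_one_right (by positivity) hexp) (hVnonneg _ _))
  refine ⟨hbound, ?_, ?_⟩
  · refine squeeze_zero' (.of_forall fun t => integral_nonneg fun ω => hVnonneg _ _)
      ((eventually_ge_atTop 0).mono hbound) ?_
    simpa only [zero_mul] using (tendsto_add_exp_mul_exp_neg S hlam hslow).mul_const (V p₀ x₀)
  · refine ((integrableOn_add_exp_mul_exp_neg S hlam hslow).mul_const (V p₀ x₀)).mono'
      hmeas ?_
    filter_upwards [ae_restrict_mem measurableSet_Ici] with t (ht : 0 ≤ t)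
    rw [norm_of_nonneg (integral_nonneg fun ω => hVnonneg _ _)]
    exact hbound t ht

/-- Expected Lyapunov decay: under the subsystem decay condition, the ratio condition,
a bound `E[μ^{N(t)}] ≤ S + e^{(μλ̄-λ̃)t}` on the mgf of the switch count, and the slow
switching condition `μλ̄ - λ̃ < λ₀`, one has
`E[V_{σ(t)}(x(t))] ≤ (S + e^{(μλ̄-λ̃)t}) e^{-λ₀ t} V_{σ(0)}(x₀)`, so this expectation
tends to `0` and is integrable on `[0,∞)`. -/
theorem expected_lyapunov_decay
    {n : ℕ} {P : Type*} [Finite P]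
    {Ω : Type*} [MeasurableSpace Ω] (ℙ : Measure Ω) [IsProbabilityMeasure ℙ]
    (f : P → EuclideanSpace ℝ (Fin n) → EuclideanSpace ℝ (Fin n))
    (hf : ∀ p, LocallyLipschitz (f p))
    (V : P → EuclideanSpace ℝ (Fin n) → ℝ)
    (hVC1 : ∀ p, ContDiff ℝ 1 (V p)) (hVnonneg : ∀ p y, 0 ≤ V p y)
    (lam₀ lamTilde lamBar μ S : ℝ)
    (hlam : 0 < lam₀) (hlt : 0 < lamTilde) (hlb : 0 < lamBar) (hμ : 1 < μ) (hS : 0 ≤ S)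
    (hdecay : ∀ p y, fderiv ℝ (V p) y (f p y) ≤ -lam₀ * V p y)
    (hratio : ∀ p₁ p₂ y, V p₁ y ≤ μ * V p₂ y)
    (σ : Ω → ℝ → P) (X : Ω → ℝ → EuclideanSpace ℝ (Fin n)) (N : Ω → ℝ → ℕ)
    (τ : Ω → ℕ → ℝ) (x₀ : EuclideanSpace ℝ (Fin n)) (p₀ : P)
    -- pathwise structure of the randomly switched system
    (hτ0 : ∀ ω, τ ω 0 = 0) (hτmono : ∀ ω, StrictMono (τ ω))
    (hτdiv : ∀ ω, Filter.Tendsto (τ ω) Filter.atTop Filter.atTop)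
    (hσ : ∀ ω, ∀ i : ℕ, ∀ t ∈ Set.Ico (τ ω i) (τ ω (i + 1)), σ ω t = σ ω (τ ω i))
    (hσ0 : ∀ ω, σ ω 0 = p₀)
    (hN : ∀ ω, ∀ t : ℝ, 0 ≤ t → τ ω (N ω t) ≤ t ∧ t < τ ω (N ω t + 1))
    (hx0 : ∀ ω, X ω 0 = x₀) (hxcont : ∀ ω, Continuous (X ω))
    (hsol : ∀ ω, ∀ t : ℝ, 0 ≤ t → t ∉ Set.range (τ ω) →
      HasDerivAt (X ω) (f (σ ω t) (X ω t)) t)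
    -- measurability and integrability
    (hVmeas : ∀ t : ℝ, Measurable (fun ω => V (σ ω t) (X ω t)))
    (hNint : ∀ t : ℝ, 0 ≤ t → Integrable (fun ω => μ ^ (N ω t)) ℙ)
    -- (iii): moment generating function bound
    (hmgf : ∀ t : ℝ, 0 ≤ t →
      ∫ ω, (μ : ℝ) ^ (N ω t) ∂ℙ ≤ S + Real.exp ((μ * lamBar - lamTilde) * t))
    -- (iv): slow switching
    (hslow : μ * lamBar - lamTilde < lam₀) :
    (∀ t : ℝ, 0 ≤ t →
        ∫ ω, V (σ ω t) (X ω t) ∂ℙ ≤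
          (S + Real.exp ((μ * lamBar - lamTilde) * t)) * Real.exp (-lam₀ * t) * V p₀ x₀) ∧
      Filter.Tendsto (fun t => ∫ ω, V (σ ω t) (X ω t) ∂ℙ) Filter.atTop (nhds 0) ∧
      IntegrableOn (fun t => ∫ ω, V (σ ω t) (X ω t) ∂ℙ) (Set.Ici (0:ℝ)) :=
  expected_lyapunov_decay_general ℙ f V hVC1 hVnonneg lam₀ lamTilde lamBar μ S hlam hμ hdecay hratio
    σ X N τ x₀ p₀ hτ0 hτmono hσ hσ0 hN hx0 hxcont hsol hVmeas hNint hmgf hslow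
end
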